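/- arXiv:2512.10445 — 3 statements merged into one kernel-verified Lean document; each statement's English description precedes it below -/
import Mathlib

section
/- In the degenerate MSE setting: suppose for each training environment e, R_e(f) = σ_e^2 + D_e(f) where D_e(f) = E[(f^e(X) - f(X))^2] ≥ 0, there is a unique e* with σ_{e*}^2 = max_e σ_e^2, and σ_{e*}^2 ≥ max_{e ≠ e*} (σ_e^2 + Δ_{e,e*}) where Δ_{e,e*} = E[(f^e(X) - f^{e*}(X))^2]. Then the predictor f^{e*} satisfies max_e R_e(f^{e*}) = σ_{e*}^2, and this equals min_f max_e R_e(f) over any class containing f^{e*}; i.e., f^{e*} minimizes the maximum MSE across training environments. -/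
open MeasureTheory

/-- Degenerate MSE setting: under the stated noise-dominance condition, the
regression function of the noisiest environment minimizes the maximum MSE. -/
theorem stmt12 {X : Type*} [MeasurableSpace X] {E : Type*} [Fintype E]
    [Nonempty E]
    (PX : Measure X) [IsProbabilityMeasure PX]
    (fe : E → X → ℝ) (σ2 : E → ℝ) (estar : E)
    (hmax : ∀ e, e ≠ estar → σ2 e < σ2 estar)
    (hdom : ∀ e, e ≠ estar →
      σ2 e + ∫ x, (fe e x - fe estar x) ^ 2 ∂PX ≤ σ2 estar)
    (𝓕 : Set (X → ℝ)) (hmem : fe estar ∈ 𝓕) :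
    (⨆ e, (σ2 e + ∫ x, (fe e x - fe estar x) ^ 2 ∂PX)) = σ2 estar ∧
    ∀ f ∈ 𝓕, σ2 estar ≤ ⨆ e, (σ2 e + ∫ x, (fe e x - f x) ^ 2 ∂PX) := by
  constructor
  · apply le_antisymm
    · apply ciSup_le
      intro e
      by_cases he : e = estar
      · subst he
        simp [sq_nonneg]
      · exact hdom e he
    · have h := le_ciSup (Finite.bddAbove_range
        (fun e => σ2 e + ∫ x, (fe e x - fe estar x) ^ 2 ∂PX)) estar
      simpa using h
  · intro f hf
    have h := le_ciSup (Finite.bddAbove_range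
      (fun e => σ2 e + ∫ x, (fe e x - f x) ^ 2 ∂PX)) estar
    have hnn : 0 ≤ ∫ x, (fe estar x - f x) ^ 2 ∂PX :=
      integral_nonneg fun x => sq_nonneg _
    linarith
end

section
/- (Counterexample: MaxRM-optimal predictor outside the magging class.) Consider three environments with piecewise mixture covariate densities on [-4,4]: environments 1 and 3 place mass 0.9 uniformly on [0,4] and 0.1 uniformly on [-4,0], environment 2 places mass 0.1 on [0,4] and 0.9 on [-4,0]; responses Y^e = c_e X^e + ε with slopes c_1 = 3, c_2 = -3, c_3 = 2 and unit-variance noise. For piecewise-linear predictors f(x) = c_+ x 1{x≥0} + c_- x 1{x<0}, the per-environment MSEs are E_1 = (24/5)(3-c_+)^2 + (8/15)(3-c_-)^2 + 1, E_2 = (8/15)(-3-c_+)^2 + (24/5)(-3-c_-)^2 + 1, E_3 = (24/5)(2-c_+)^2 + (8/15)(2-c_-)^2 + 1. The minimax choice is c_+* = 2.4, c_-* = -2.4 with worst-case MSE 18.28, strictly smaller than the minimal worst-case MSE 49 achievable by any linear predictor g(x) = βx with β a convex combination of {3, -3, 2}. -/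
/-- Per-environment MSE of the piecewise-linear predictor with slopes
`cp` (on `x ≥ 0`) and `cm` (on `x < 0`), environment 1. -/
noncomputable def E1 (cp cm : ℝ) : ℝ :=
  (24 / 5) * (3 - cp) ^ 2 + (8 / 15) * (3 - cm) ^ 2 + 1

noncomputable def E2 (cp cm : ℝ) : ℝ :=
  (8 / 15) * (-3 - cp) ^ 2 + (24 / 5) * (-3 - cm) ^ 2 + 1

noncomputable def E3 (cp cm : ℝ) : ℝ :=
  (24 / 5) * (2 - cp) ^ 2 + (8 / 15) * (2 - cm) ^ 2 + 1

/-- Worst-case MSE across the three environments. -/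
noncomputable def M (cp cm : ℝ) : ℝ := max (E1 cp cm) (max (E2 cp cm) (E3 cp cm))

/-- The minimax piecewise-linear predictor has slopes `(2.4, -2.4)` and
worst-case MSE `18.28`, strictly smaller than the optimal worst-case MSE `49`
achievable by linear predictors `x ↦ βx` with `β` in the convex hull
`[-3, 3]` of `{3, -3, 2}` (the magging class), attained at `β = 0`. -/
theorem stmt13 :
    M 2.4 (-2.4) = 18.28 ∧
    (∀ cp cm : ℝ, 18.28 ≤ M cp cm) ∧
    (∀ β ∈ Set.Icc (-3 : ℝ) 3, 49 ≤ M β β) ∧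
    M 0 0 = 49 ∧ (18.28 : ℝ) < 49 := by
  refine ⟨?_, ?_, ?_, ?_, by norm_num⟩
  · unfold M E1 E2 E3
    norm_num [max_eq_left, max_eq_right]
  · intro cp cm
    have h1 : E1 cp cm ≤ M cp cm := le_max_left _ _
    have h2 : E2 cp cm ≤ M cp cm := le_trans (le_max_left _ _) (le_max_right _ _)
    have hsum : (36.56 : ℝ) ≤ E1 cp cm + E2 cp cm := by
      unfold E1 E2
      nlinarith [sq_nonneg (cp - 2.4), sq_nonneg (cm + 2.4)]
    linarith
  · intro β hβ
    obtain ⟨hl, hr⟩ := hβ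
    have h1 : E1 β β ≤ M β β := le_max_left _ _
    have h2 : E2 β β ≤ M β β := le_trans (le_max_left _ _) (le_max_right _ _)
    rcases le_or_gt 0 β with h | h
    · have : (49 : ℝ) ≤ E2 β β := by unfold E2; nlinarith
      linarith
    · have : (49 : ℝ) ≤ E1 β β := by unfold E1; nlinarith
      linarith
  · unfold M E1 E2 E3
    norm_num [max_eq_left, max_eq_right]
end

section
/- (Equality of risks for convex-combination test environments, negative reward.) Assume the covariate distribution P^X is identical in all environments and E[Y^e | X^e = x] = f^e(x). For a test environment e′ with f^{e′} = Σ_k q_k f^{e_k}, q ∈ Δ_K, the negative reward of any f satisfies R^{NRW}_{e′}(f) = E_{P^X}[f(X)^2] - 2 Σ_k q_k E_{P^X}[f^{e_k}(X) f(X)], which is affine in q; consequently max over all such test environments of R^{NRW}_{e′}(f) equals max_k R^{NRW}_{e_k}(f). -/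
open MeasureTheory

/-- The probability simplex in `ℝ^K`. -/
def simplexK (K : ℕ) : Set (Fin K → ℝ) :=
  {q | (∀ k, 0 ≤ q k) ∧ ∑ k, q k = 1}

lemma l2_mul_integrable {X : Type*} [MeasurableSpace X] {μ : Measure X}
    {f g : X → ℝ} (hf : MemLp f 2 μ) (hg : MemLp g 2 μ) :
    Integrable (fun x => f x * g x) μ := by
  refine Integrable.mono' ((hf.integrable_sq.add hg.integrable_sq).const_mul (1/2))
    (hf.aestronglyMeasurable.mul hg.aestronglyMeasurable) ?_
  filter_upwards with x
  have : 0 ≤ (|f x| - |g x|)^2 := sq_nonneg _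
  have habs : ‖f x * g x‖ = |f x| * |g x| := by
    simp [abs_mul]
  rw [habs]
  simp only [Pi.add_apply]
  nlinarith [sq_abs (f x), sq_abs (g x), sq_nonneg (|f x| - |g x|)]

/-- Equality of negative rewards for convex-combination test environments:
with a common covariate distribution `PX`, for a test environment with
regression function `∑ q_k f^{e_k}` the negative reward of `f` equals
`E[f²] - 2 ∑ q_k E[f^{e_k} f]`, which is affine in `q`; hence the maximum
negative reward over such test environments equals the maximum over the
training environments. -/
theorem stmt16 {X : Type*} [MeasurableSpace X] (K : ℕ) (hK : 0 < K)
    (PX : Measure X) [IsProbabilityMeasure PX]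
    (fe : Fin K → X → ℝ) (f : X → ℝ)
    (hfe : ∀ k, MemLp (fe k) 2 PX) (hf : MemLp f 2 PX)
    (P : (Fin K → ℝ) → Measure (X × ℝ))
    (hprob : ∀ q ∈ simplexK K, IsProbabilityMeasure (P q))
    (hmarg : ∀ q ∈ simplexK K, (P q).map Prod.fst = PX)
    (hcond : ∀ q ∈ simplexK K,
      ∫ z, z.2 * f z.1 ∂(P q) = ∫ x, (∑ k, q k * fe k x) * f x ∂PX)
    (hY2 : ∀ q ∈ simplexK K, Integrable (fun z : X × ℝ => z.2 ^ 2) (P q))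
    (hYf : ∀ q ∈ simplexK K,
      Integrable (fun z : X × ℝ => z.2 * f z.1) (P q)) :
    (∀ q ∈ simplexK K,
      (∫ z, (z.2 - f z.1) ^ 2 ∂(P q)) - ∫ z, z.2 ^ 2 ∂(P q) =
        (∫ x, f x ^ 2 ∂PX) - 2 * ∑ k, q k * ∫ x, fe k x * f x ∂PX) ∧
    IsGreatest ((fun q =>
        (∫ z, (z.2 - f z.1) ^ 2 ∂(P q)) - ∫ z, z.2 ^ 2 ∂(P q)) ''
        simplexK K)
      (⨆ k, ((∫ x, f x ^ 2 ∂PX) - 2 * ∫ x, fe k x * f x ∂PX)) := by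
  set C : ℝ := ∫ x, f x ^ 2 ∂PX with hC
  set c : Fin K → ℝ := fun k => ∫ x, fe k x * f x ∂PX with hc
  -- key affine formula
  have key : ∀ q ∈ simplexK K,
      (∫ z, (z.2 - f z.1) ^ 2 ∂(P q)) - ∫ z, z.2 ^ 2 ∂(P q) =
        C - 2 * ∑ k, q k * c k := by
    intro q hq
    have hmap := hmarg q hq
    -- f² pulled back
    have hsq : Integrable (fun x => f x ^ 2) PX := hf.integrable_sq
    have hsm : AEStronglyMeasurable (fun x => f x ^ 2) ((P q).map Prod.fst) := by
      rw [hmap]; exact hsq.aestronglyMeasurable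
    have hfsq : Integrable (fun z : X × ℝ => f z.1 ^ 2) (P q) := by
      have := (integrable_map_measure hsm measurable_fst.aemeasurable).mp
        (by rw [hmap]; exact hsq)
      exact this
    have hint_eq : ∫ z, f z.1 ^ 2 ∂(P q) = C := by
      have := integral_map (μ := P q)
        (measurable_fst.aemeasurable : AEMeasurable (Prod.fst : X × ℝ → X) (P q)) hsm
      rw [hmap] at this
      exact this.symm
    -- expand the square
    have hexp : (fun z : X × ℝ => (z.2 - f z.1) ^ 2)
        = fun z => z.2 ^ 2 - 2 * (z.2 * f z.1) + f z.1 ^ 2 := by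
      funext z; ring
    have hi12 : Integrable (fun z : X × ℝ => z.2 ^ 2 - 2 * (z.2 * f z.1)) (P q) :=
      (hY2 q hq).sub ((hYf q hq).const_mul 2)
    rw [hexp, integral_add hi12 hfsq]
    rw [integral_sub (hY2 q hq) ((hYf q hq).const_mul 2), integral_const_mul,
      hint_eq, hcond q hq]
    have hsum : ∫ x, (∑ k, q k * fe k x) * f x ∂PX = ∑ k, q k * c k := by
      have h1 : (fun x => (∑ k, q k * fe k x) * f x)
          = fun x => ∑ k, q k * (fe k x * f x) := by
        funext x; rw [Finset.sum_mul]; congr 1; ext k; ring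
      rw [h1, integral_finset_sum]
      · congr 1; ext k
        rw [← integral_const_mul]
      · intro k _
        exact (l2_mul_integrable (hfe k) hf).const_mul (q k)
    rw [hsum]; ring
  refine ⟨key, ?_⟩
  -- the max part
  haveI : Nonempty (Fin K) := ⟨⟨0, hK⟩⟩
  set a : Fin K → ℝ := fun k => C - 2 * c k with ha
  obtain ⟨k0, hk0⟩ := Finite.exists_max a
  have hbdd : BddAbove (Set.range a) := Set.finite_range a |>.bddAbove
  have hsup : (⨆ k, a k) = a k0 :=
    le_antisymm (ciSup_le hk0) (le_ciSup hbdd k0)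
  constructor
  · -- attained at the vertex e_{k0}
    refine ⟨fun k => if k = k0 then 1 else 0, ⟨?_, ?_⟩, ?_⟩
    · intro k; by_cases h : k = k0 <;> simp [h]
    · simp
    · have hmem : (fun k => if k = k0 then (1:ℝ) else 0) ∈ simplexK K := by
        constructor
        · intro k; by_cases h : k = k0 <;> simp [h]
        · simp
      dsimp only
      rw [key _ hmem, hsup]
      have hsum0 : ∑ k, (if k = k0 then (1:ℝ) else 0) * c k = c k0 := by
        simp [ite_mul]
      rw [hsum0]
  · rintro x ⟨q, hq, rfl⟩
    dsimp only
    rw [key q hq, hsup]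
    have hck0 : ∀ k, c k0 ≤ c k := by
      intro k
      have := hk0 k
      simp only [ha] at this
      linarith
    have : c k0 ≤ ∑ k, q k * c k := by
      calc c k0 = ∑ k, q k * c k0 := by
              rw [← Finset.sum_mul, hq.2, one_mul]
        _ ≤ ∑ k, q k * c k :=
              Finset.sum_le_sum fun k _ =>
                mul_le_mul_of_nonneg_left (hck0 k) (hq.1 k)
    simp only [ha]
    linarith
end
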